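/- Let A ⊆ C_k(M,2) be a sequentially closed set of functions vanishing at ∞ with the constant zero function c₀ in cl(A) \ A, and let A_n = {f ∈ A : f(U(n)) = {0}}. Then there exists a sequence (k_n)_{n∈ω} such that for each n, every f ∈ A_{n+1} takes the value 1 at some point of ⋃_{i≤n} {i} × k_i. -/

import Mathlib

open Filter Topology

/-- The countable metric fan `M = (ω × ω) ∪ {∞}`; `none` plays the role of `∞`. -/
def Fan : Type := Option (ℕ × ℕ)

/-- The basic neighborhood `U(n) = {∞} ∪ ((ω \ n) × ω)` of `∞`. -/
def fanU (n : ℕ) : Set Fan := {x | x = none ∨ ∃ p : ℕ × ℕ, x = some p ∧ n ≤ p.1}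

/-- The fan topology: points of `ω × ω` are isolated and the sets `U(n)` are
basic neighborhoods of `∞`. -/
instance : TopologicalSpace Fan :=
  TopologicalSpace.generateFrom
    ({V | ∃ p : ℕ × ℕ, V = {some p}} ∪ {V | ∃ n : ℕ, V = fanU n})

/-!
Build `k` column by column, maintaining the invariant that no `f ∈ A` vanishes on
`U(n) ∪ B_n`, where `B_n = ⋃_{i<n} {i} × k_i`. For `n = 0` this is `c₀ ∉ A`. Given the invariant
at `n`, suppose every `K` admits `f_K ∈ A` vanishing on `U(n+1) ∪ B_n ∪ {n} × K`. Functions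
vanishing on `U(n+1)` form a compact metrizable family on which the compact-open topology is the
pointwise one, so a subsequence converges to some `g`, which lies in `A` by sequential closedness
and vanishes on `U(n+1) ∪ B_n ∪ {n} × ω = U(n) ∪ B_n`, a contradiction. So some `k_n` works, and
the invariant passes to `n + 1`.
-/

namespace Fan

instance : Countable Fan := inferInstanceAs (Countable (Option (ℕ × ℕ)))

def VanishesOn (f : Fan → Bool) (s : Set Fan) : Prop := ∀ x ∈ s, f x = false

lemma isOpen_singleton_some (p : ℕ × ℕ) : IsOpen ({some p} : Set Fan) :=
  TopologicalSpace.GenerateOpen.basic _ (Or.inl ⟨p, rfl⟩)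

lemma isOpen_fanU (n : ℕ) : IsOpen (fanU n) :=
  TopologicalSpace.GenerateOpen.basic _ (Or.inr ⟨n, rfl⟩)

lemma none_mem_fanU (n : ℕ) : (none : Fan) ∈ fanU n := Or.inl rfl

lemma some_mem_fanU {n : ℕ} {p : ℕ × ℕ} (h : n ≤ p.1) : (some p : Fan) ∈ fanU n :=
  Or.inr ⟨p, rfl, h⟩

lemma mem_fanU_zero (x : Fan) : x ∈ fanU 0 := by
  cases x with
  | none => exact none_mem_fanU 0
  | some p => exact some_mem_fanU (Nat.zero_le p.1)

lemma mem_fanU_succ_or_eq_of_mem_fanU {n : ℕ} {x : Fan} (hx : x ∈ fanU n) :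
    x ∈ fanU (n + 1) ∨ ∃ j, x = some (n, j) := by
  rcases hx with rfl | ⟨⟨i, j⟩, rfl, hi⟩
  · exact Or.inl (none_mem_fanU _)
  · rcases hi.eq_or_lt with rfl | hi
    · exact Or.inr ⟨j, rfl⟩
    · exact Or.inl (some_mem_fanU hi)

lemma continuous_of_eqOn_fanU {X : Type*} [TopologicalSpace X] {g : Fan → X} {N : ℕ}
    (h : ∀ x ∈ fanU N, g x = g none) : Continuous g := by
  refine ((IsLocallyConstant.iff_eventually_eq g).2 fun x => ?_).continuous
  cases x with
  | none => exact eventually_of_mem ((isOpen_fanU N).mem_nhds (none_mem_fanU N)) h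
  | some p =>
    exact eventually_of_mem ((isOpen_singleton_some p).mem_nhds rfl) fun y hy => by rw [hy]

lemma finite_diff_fanU_of_isCompact {C : Set Fan} (hC : IsCompact C) (N : ℕ) :
    (C \ fanU N).Finite := by
  refine (hC.diff (isOpen_fanU N)).finite (isDiscrete_iff_forall_mem_exists_isOpen.2 ?_)
  rintro (_ | p) hx
  · exact absurd (none_mem_fanU N) hx.2
  · exact ⟨{some p}, isOpen_singleton_some p, Set.inter_eq_left.2 (Set.singleton_subset_iff.2 hx)⟩

/-- A compact set has only finitely many points outside `U(N)`, so for functions that agree on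
`U(N)` compact-open convergence reduces to pointwise convergence. -/
lemma tendsto_of_tendsto_apply_of_eqOn_fanU {X ι : Type*} [TopologicalSpace X] {l : Filter ι}
    {F : ι → C(Fan, X)} {G : C(Fan, X)} {N : ℕ}
    (hF : ∀ x, Tendsto (fun i => F i x) l (𝓝 (G x))) (hFU : ∀ i, ∀ x ∈ fanU N, F i x = G x) :
    Tendsto F l (𝓝 G) := by
  rw [ContinuousMap.tendsto_nhds_compactOpen]
  intro C hC U hU hGU
  have hfin := finite_diff_fanU_of_isCompact hC N
  filter_upwards [(eventually_all_finite hfin).2 fun x hx => hF x (hU.mem_nhds (hGU hx.1))]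
    with i hi x hx
  by_cases hxN : x ∈ fanU N
  · rw [hFU i x hxN]
    exact hGU hx
  · exact hi x ⟨hx, hxN⟩

lemma exists_subseq_tendsto {F : ℕ → C(Fan, Bool)} {N : ℕ}
    (hF : ∀ m, VanishesOn (F m) (fanU N)) :
    ∃ (G : C(Fan, Bool)) (φ : ℕ → ℕ), StrictMono φ ∧ Tendsto (F ∘ φ) atTop (𝓝 G) ∧
      ∀ x, ∀ᶠ m in atTop, F (φ m) x = G x := by
  obtain ⟨g, φ, hφ, hg⟩ := CompactSpace.tendsto_subseq fun m => ⇑(F m)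
  have hg_apply : ∀ x, Tendsto (fun m => F (φ m) x) atTop (𝓝 (g x)) := tendsto_pi_nhds.1 hg
  have hg_eventually (x : Fan) : ∀ᶠ m in atTop, F (φ m) x = g x := by
    simpa only [nhds_discrete, tendsto_pure] using hg_apply x
  have hgU : ∀ x ∈ fanU N, g x = false := fun x hx =>
    ((hg_eventually x).and (Eventually.of_forall fun m => hF (φ m) x hx)).exists.elim
      fun _ h => h.1 ▸ h.2
  let G : C(Fan, Bool) :=
    ⟨g, continuous_of_eqOn_fanU fun x hx => (hgU x hx).trans (hgU none (none_mem_fanU N)).symm⟩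
  refine ⟨G, φ, hφ, tendsto_of_tendsto_apply_of_eqOn_fanU (N := N) hg_apply fun m x hx => ?_,
    hg_eventually⟩
  exact (hF (φ m) x hx).trans (hgU x hx).symm

variable {A : Set C(Fan, Bool)}

lemma exists_column_bound (hA : IsSeqClosed A) {n : ℕ} {S : Set Fan}
    (hS : ∀ f ∈ A, VanishesOn f (fanU n) → ∃ x ∈ S, f x = true) :
    ∃ K, ∀ f ∈ A, VanishesOn f (fanU (n + 1)) → VanishesOn f S →
      ∃ j < K, f (some (n, j)) = true := by
  by_contra! h
  choose F hFA hFU hFS hFcol using h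
  obtain ⟨G, φ, hφ, hlim, hpt⟩ := exists_subseq_tendsto hFU
  have hG_false (x : Fan) (hx : ∀ᶠ m in atTop, F (φ m) x = false) : G x = false :=
    ((hpt x).and hx).exists.elim fun _ h => h.1 ▸ h.2
  have hGU : VanishesOn G (fanU n) := fun x hx => by
    rcases mem_fanU_succ_or_eq_of_mem_fanU hx with hx | ⟨j, rfl⟩
    · exact hG_false x (Eventually.of_forall fun m => hFU (φ m) x hx)
    · refine hG_false _ ((eventually_gt_atTop j).mono fun m hm => ?_)
      simpa using hFcol (φ m) j (hm.trans_le hφ.le_apply)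
  obtain ⟨x, hxS, hGx⟩ := hS G (hA (fun m => hFA (φ m)) hlim) hGU
  simp [hG_false x (Eventually.of_forall fun m => hFS (φ m) x hxS)] at hGx

/-- The bound `k_n` for `B_n = S`; it is `sInf ∅ = 0` when no bound exists. -/
noncomputable def columnBound (A : Set C(Fan, Bool)) (n : ℕ) (S : Set Fan) : ℕ :=
  sInf {K | ∀ f ∈ A, VanishesOn f (fanU (n + 1)) → VanishesOn f S →
    ∃ j < K, f (some (n, j)) = true}

/-- The finite set `B_n = ⋃_{i<n} {i} × k_i` of the construction. -/
noncomputable def block (A : Set C(Fan, Bool)) : ℕ → Set Fan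
  | 0 => ∅
  | n + 1 => block A n ∪ {x | ∃ j < columnBound A n (block A n), x = some (n, j)}

lemma exists_eq_of_mem_block {n : ℕ} {x : Fan} (hx : x ∈ block A n) :
    ∃ i < n, ∃ j < columnBound A i (block A i), x = some (i, j) := by
  induction n with
  | zero => exact absurd hx (Set.notMem_empty x)
  | succ n ih =>
    rcases hx with hx | ⟨j, hj, rfl⟩
    · obtain ⟨i, hi, j, hj, rfl⟩ := ih hx
      exact ⟨i, hi.trans n.lt_succ_self, j, hj, rfl⟩
    · exact ⟨n, n.lt_succ_self, j, hj, rfl⟩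

lemma exists_mem_block_eq_true (hA : IsSeqClosed A)
    (h0 : ∀ f ∈ A, ¬ ∀ x, f x = false) (n : ℕ) :
    ∀ f ∈ A, VanishesOn f (fanU n) → ∃ x ∈ block A n, f x = true := by
  induction n with
  | zero => exact fun f hf hfU => absurd (fun x => hfU x (mem_fanU_zero x)) (h0 f hf)
  | succ n ih =>
    intro f hf hfU
    by_cases hfS : VanishesOn f (block A n)
    · obtain ⟨j, hj, hfj⟩ :=
        Nat.sInf_mem (exists_column_bound hA ih) f hf hfU hfS
      exact ⟨some (n, j), Or.inr ⟨j, hj, rfl⟩, hfj⟩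
    · obtain ⟨x, hx, hfx⟩ : ∃ x ∈ block A n, f x = true := by
        simpa [VanishesOn] using hfS
      exact ⟨x, Or.inl hx, hfx⟩

end Fan

theorem stmt10_general (A : Set C(Fan, Bool)) (c0 : C(Fan, Bool))
    (hc0 : ∀ x, c0 x = false)
    (hseq : IsSeqClosed A)
    (hcl : c0 ∈ closure A \ A) :
    ∃ k : ℕ → ℕ, ∀ n : ℕ,
      ∀ f ∈ {f ∈ A | ∀ x ∈ fanU (n + 1), f x = false},
        ∃ i ≤ n, ∃ j < k i, f (some (i, j)) = true := by
  have h0 : ∀ f ∈ A, ¬ ∀ x, f x = false := fun f hf hf0 =>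
    hcl.2 (ContinuousMap.ext (fun x => (hf0 x).trans (hc0 x).symm) ▸ hf)
  refine ⟨fun i => Fan.columnBound A i (Fan.block A i), fun n f hf => ?_⟩
  obtain ⟨x, hx, hfx⟩ := Fan.exists_mem_block_eq_true hseq h0 (n + 1) f hf.1 hf.2
  obtain ⟨i, hi, j, hj, rfl⟩ := Fan.exists_eq_of_mem_block hx
  exact ⟨i, Nat.le_of_lt_succ hi, j, hj, hfx⟩

theorem stmt10 (A : Set C(Fan, Bool)) (c0 : C(Fan, Bool))
    (hc0 : ∀ x, c0 x = false)
    (hseq : IsSeqClosed A)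
    (hvanish : ∀ f ∈ A, f none = false)
    (hcl : c0 ∈ closure A \ A) :
    ∃ k : ℕ → ℕ, ∀ n : ℕ,
      ∀ f ∈ {f ∈ A | ∀ x ∈ fanU (n + 1), f x = false},
        ∃ i ≤ n, ∃ j < k i, f (some (i, j)) = true :=
  stmt10_general A c0 hc0 hseq hcl
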